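/- arXiv:1805.07232 — 2 statements merged into one kernel-verified Lean document; each statement's English description precedes it below -/
import Mathlib

section
/- Let G be a finite connected graph with δ-thin triangles, let u be any vertex, let v ∈ F(u), let t ∈ F(v), and let c be a vertex of a (v,t)-geodesic at distance ⌈d_G(v,t)/2⌉ from t. Then ecc_G(c) ≤ rad(G) + 3δ, and for every integer k ≥ 0 and every vertex x with ecc_G(x) = rad(G) + k one has k − 3δ ≤ d_G(x,c) ≤ k + 3δ + 1. In particular, C(G) ⊆ B(c, 3δ+1). -/
open SimpleGraph

variable {V : Type*}

/-- Eccentricity of a vertex: the largest distance from `v` to any vertex. -/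
noncomputable def ecc [Fintype V] (G : SimpleGraph V) (v : V) : ℕ :=
  Finset.univ.sup fun u => G.dist v u

/-- Radius: the minimum eccentricity. -/
noncomputable def rad [Fintype V] (G : SimpleGraph V) : ℕ :=
  sInf (Set.range (ecc G))

/-- Diameter: the maximum eccentricity. -/
noncomputable def gdiam [Fintype V] (G : SimpleGraph V) : ℕ :=
  Finset.univ.sup fun v => ecc G v

/-- `G` has δ-thin triangles: for all vertices `x y z`, all geodesics `p1` from `x` to `y`
and `p2` from `x` to `z`, and all vertices `u ∈ p1`, `v ∈ p2` with
`d(x,u) = d(x,v) ≤ (y|z)_x`, one has `d(u,v) ≤ δ`.  The Gromov product condition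
`d(x,u) ≤ (y|z)_x = (d(x,y) + d(x,z) - d(y,z))/2` is written additively in `ℕ`. -/
def ThinTriangles (G : SimpleGraph V) (δ : ℝ) : Prop :=
  ∀ (x y z : V) (p1 : G.Walk x y) (p2 : G.Walk x z),
    p1.length = G.dist x y → p2.length = G.dist x z →
    ∀ u ∈ p1.support, ∀ v ∈ p2.support,
      G.dist x u = G.dist x v →
      2 * G.dist x u + G.dist y z ≤ G.dist x y + G.dist x z →
      (G.dist u v : ℝ) ≤ δ

/-- ℕ-valued version of thinness. -/
private def ThinN (G : SimpleGraph V) (n : ℕ) : Prop :=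
  ∀ (x y z : V) (p1 : G.Walk x y) (p2 : G.Walk x z),
    p1.length = G.dist x y → p2.length = G.dist x z →
    ∀ u ∈ p1.support, ∀ v ∈ p2.support,
      G.dist x u = G.dist x v →
      2 * G.dist x u + G.dist y z ≤ G.dist x y + G.dist x z →
      G.dist u v ≤ n

section Helpers

variable {G : SimpleGraph V}

private lemma exists_vertex_le_aux (hG : G.Connected) :
    ∀ (N : ℕ) {x y : V} (p : G.Walk x y), p.length ≤ N → ∀ j, j ≤ p.length →
      ∃ m ∈ p.support, G.dist x m ≤ j ∧ G.dist m y + j ≤ p.length := by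
  intro N
  induction N with
  | zero =>
    intro x y p hp j hj
    refine ⟨x, Walk.start_mem_support p, by simp [SimpleGraph.dist_self], ?_⟩
    have := dist_le p
    omega
  | succ N ih =>
    intro x y p hp j hj
    cases j with
    | zero =>
      refine ⟨x, Walk.start_mem_support p, by simp [SimpleGraph.dist_self], ?_⟩
      have := dist_le p
      omega
    | succ j' =>
      cases p with
      | nil => simp at hj
      | @cons _ b _ h q =>
        have hq : q.length ≤ N := by
          simp only [Walk.length_cons] at hp
          omega
        obtain ⟨m, hm, h1, h2⟩ := ih q hq j' (by
          simp only [Walk.length_cons] at hj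
          omega)
        refine ⟨m, by simp [hm], ?_, ?_⟩
        · have hab : G.dist x b ≤ 1 := by
            have := dist_le (Walk.cons h Walk.nil)
            simpa using this
          have := hG.dist_triangle (u := x) (v := b) (w := m)
          omega
        · simp only [Walk.length_cons]
          omega

private lemma exists_vertex_le (hG : G.Connected) {x y : V} (p : G.Walk x y) (j : ℕ)
    (hj : j ≤ p.length) :
    ∃ m ∈ p.support, G.dist x m ≤ j ∧ G.dist m y + j ≤ p.length :=
  exists_vertex_le_aux hG p.length p le_rfl j hj

private lemma geodesic_point (hG : G.Connected) {x y : V} (p : G.Walk x y)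
    (hp : p.length = G.dist x y) (j : ℕ) (hj : j ≤ G.dist x y) :
    ∃ m ∈ p.support, G.dist x m = j ∧ G.dist x m + G.dist m y = G.dist x y := by
  obtain ⟨m, hm, h1, h2⟩ := exists_vertex_le hG p j (by omega)
  have h3 := hG.dist_triangle (u := x) (v := m) (w := y)
  exact ⟨m, hm, by omega, by omega⟩

private lemma geodesic_split (hG : G.Connected) {x y : V} (p : G.Walk x y)
    (hp : p.length = G.dist x y) {c : V} (hc : c ∈ p.support) :
    G.dist x c + G.dist c y = G.dist x y := by
  classical
  have h1 := dist_le (p.takeUntil c hc)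
  have h2 := dist_le (p.dropUntil c hc)
  have h3 : (p.takeUntil c hc).length + (p.dropUntil c hc).length = p.length := by
    rw [← Walk.length_append, p.take_spec hc]
  have h4 := hG.dist_triangle (u := x) (v := c) (w := y)
  omega

/-- Lemma A: midpoint/apex estimate.  For `m` on a `(v,t)`-geodesic and any `w`,
either `d(m,w) + d(v,m) ≤ n + d(v,w)` or `d(m,w) + d(m,t) ≤ n + d(t,w)`. -/
private lemma lemA (hG : G.Connected) {n : ℕ} (hthin : ThinN G n) {v t : V}
    (P : G.Walk v t) (hP : P.length = G.dist v t) {m : V} (hm : m ∈ P.support) (w : V) :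
    G.dist m w + G.dist v m ≤ n + G.dist v w ∨
    G.dist m w + G.dist m t ≤ n + G.dist t w := by
  have hsplit := geodesic_split hG P hP hm
  have htri1 : G.dist v t ≤ G.dist v w + G.dist t w := by
    have h := hG.dist_triangle (u := v) (v := w) (w := t)
    have e : G.dist w t = G.dist t w := dist_comm
    omega
  by_cases hcase : 2 * G.dist v m + G.dist t w ≤ G.dist v t + G.dist v w
  · left
    obtain ⟨Q, hQ⟩ := hG.exists_walk_length_eq_dist v w
    have hjle : G.dist v m ≤ G.dist v w := by omega
    obtain ⟨m', hm's, hm'1, hm'2⟩ := geodesic_point hG Q hQ (G.dist v m) hjle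
    have hthin' := hthin v t w P Q hP hQ m hm m' hm's hm'1.symm hcase
    have htri2 := hG.dist_triangle (u := m) (v := m') (w := w)
    omega
  · right
    obtain ⟨R, hR⟩ := hG.exists_walk_length_eq_dist t w
    have hmt : m ∈ P.reverse.support := by
      rw [Walk.support_reverse]; exact List.mem_reverse.mpr hm
    have hPrev : P.reverse.length = G.dist t v := by
      rw [Walk.length_reverse, hP, dist_comm]
    have e1 : G.dist t m = G.dist m t := dist_comm
    have e2 : G.dist t v = G.dist v t := dist_comm
    have hcond : 2 * G.dist t m + G.dist v w ≤ G.dist t v + G.dist t w := by omega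
    have hjle : G.dist t m ≤ G.dist t w := by omega
    obtain ⟨m', hm's, hm'1, hm'2⟩ := geodesic_point hG R hR (G.dist t m) hjle
    have hthin' := hthin t v w P.reverse R hPrev hR m hmt m' hm's hm'1.symm hcond
    have htri2 := hG.dist_triangle (u := m) (v := m') (w := w)
    omega

/-- Lemma B: if `v` is a farthest vertex from `u` and `t` a farthest vertex from `v`,
then every vertex is within `d(v,t) + (d(v,t) mod 2) + 2n` of `t`. -/
private lemma lemB (hG : G.Connected) {n : ℕ} (hthin : ThinN G n) (u v t : V)
    (hv : ∀ x, G.dist u x ≤ G.dist u v) (ht : ∀ x, G.dist v x ≤ G.dist v t) (w : V) :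
    G.dist t w ≤ G.dist v t + G.dist v t % 2 + 2 * n := by
  have hA : G.dist u t ≤ G.dist u v := hv t
  have hB : G.dist u w ≤ G.dist u v := hv w
  have hW : G.dist v w ≤ G.dist v t := ht w
  have hC : G.dist u v ≤ G.dist v t := by
    have h := ht u
    have e : G.dist v u = G.dist u v := dist_comm
    omega
  have htri1 : G.dist v t ≤ G.dist u v + G.dist u t := by
    have h := hG.dist_triangle (u := v) (v := u) (w := t)
    have e : G.dist v u = G.dist u v := dist_comm
    omega
  have htri2 : G.dist u v ≤ G.dist u w + G.dist v w := by
    have h := hG.dist_triangle (u := u) (v := w) (w := v)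
    have e : G.dist w v = G.dist v w := dist_comm
    omega
  have htri3 : G.dist v w ≤ G.dist u v + G.dist u w := by
    have h := hG.dist_triangle (u := v) (v := u) (w := w)
    have e : G.dist v u = G.dist u v := dist_comm
    omega
  -- Route 1 : through two thin triangles with apex u
  have route1 : ∀ k : ℕ, 2 * k + G.dist v t ≤ G.dist u t + G.dist u v →
      2 * k + G.dist v w ≤ G.dist u w + G.dist u v →
      G.dist t w + 2 * k ≤ G.dist u t + G.dist u w + 2 * n := by
    intro k h1 h2
    obtain ⟨R1, hR1⟩ := hG.exists_walk_length_eq_dist u t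
    obtain ⟨R0, hR0⟩ := hG.exists_walk_length_eq_dist u v
    obtain ⟨R2, hR2⟩ := hG.exists_walk_length_eq_dist u w
    obtain ⟨a, has, ha1, ha2⟩ := geodesic_point hG R1 hR1 k (by omega)
    obtain ⟨b, hbs, hb1, hb2⟩ := geodesic_point hG R0 hR0 k (by omega)
    obtain ⟨c', hcs, hc1, hc2⟩ := geodesic_point hG R2 hR2 k (by omega)
    have hab := hthin u t v R1 R0 hR1 hR0 a has b hbs (by omega)
      (by have e : G.dist t v = G.dist v t := dist_comm; omega)
    have hcb := hthin u w v R2 R0 hR2 hR0 c' hcs b hbs (by omega)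
      (by have e : G.dist w v = G.dist v w := dist_comm; omega)
    have t1 := hG.dist_triangle (u := t) (v := a) (w := w)
    have t2 := hG.dist_triangle (u := a) (v := b) (w := w)
    have t3 := hG.dist_triangle (u := b) (v := c') (w := w)
    have e1 : G.dist t a = G.dist a t := dist_comm
    have e2 : G.dist b c' = G.dist c' b := dist_comm
    omega
  -- Route 3 : used when d(u,w) = d(u,v) and d(u,t) < d(u,v)
  have route3 : G.dist u w = G.dist u v → G.dist u t + 1 ≤ G.dist u v →
      G.dist t w ≤ G.dist v t + 2 * n := by
    intro hBC hAC
    obtain ⟨Pv, hPv⟩ := hG.exists_walk_length_eq_dist v t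
    obtain ⟨Q0, hQ0⟩ := hG.exists_walk_length_eq_dist v u
    obtain ⟨R2, hR2⟩ := hG.exists_walk_length_eq_dist u w
    have evu : G.dist v u = G.dist u v := dist_comm
    obtain ⟨m1, h1s, h11, h12⟩ := geodesic_point hG Pv hPv ((G.dist v w + 1) / 2) (by omega)
    obtain ⟨m2, h2s, h21, h22⟩ := geodesic_point hG Q0 hQ0 ((G.dist v w + 1) / 2) (by omega)
    obtain ⟨m3, h3s, h31, h32⟩ := geodesic_point hG R2 hR2
      (G.dist u v - (G.dist v w + 1) / 2) (by omega)
    have hm1m2 := hthin v t u Pv Q0 hPv hQ0 m1 h1s m2 h2s (by omega)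
      (by have e : G.dist t u = G.dist u t := dist_comm; omega)
    have hm2r : m2 ∈ Q0.reverse.support := by
      rw [Walk.support_reverse]; exact List.mem_reverse.mpr h2s
    have hQ0r : Q0.reverse.length = G.dist u v := by
      rw [Walk.length_reverse, hQ0, dist_comm]
    have hum2 : G.dist u m2 + (G.dist v w + 1) / 2 = G.dist u v := by
      have hs := geodesic_split hG Q0 hQ0 h2s
      have e : G.dist m2 u = G.dist u m2 := dist_comm
      omega
    have hm2m3 := hthin u v w Q0.reverse R2 hQ0r hR2 m2 hm2r m3 h3s (by omega) (by omega)
    have t1 := hG.dist_triangle (u := t) (v := m1) (w := w)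
    have t2 := hG.dist_triangle (u := m1) (v := m2) (w := w)
    have t3 := hG.dist_triangle (u := m2) (v := m3) (w := w)
    have e1 : G.dist t m1 = G.dist m1 t := dist_comm
    omega
  -- Route 3' : used when d(u,t) = d(u,v), d(v,w) = d(v,t), d(v,t) even
  have route3' : G.dist u t = G.dist u v → G.dist v w = G.dist v t → G.dist v t % 2 = 0 →
      G.dist t w ≤ G.dist v t + 2 * n := by
    intro hAC hWD hD2
    obtain ⟨Qw, hQw⟩ := hG.exists_walk_length_eq_dist v w
    obtain ⟨Q0, hQ0⟩ := hG.exists_walk_length_eq_dist v u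
    obtain ⟨R1, hR1⟩ := hG.exists_walk_length_eq_dist u t
    have evu : G.dist v u = G.dist u v := dist_comm
    obtain ⟨m1, h1s, h11, h12⟩ := geodesic_point hG Qw hQw (G.dist v t / 2) (by omega)
    obtain ⟨m2, h2s, h21, h22⟩ := geodesic_point hG Q0 hQ0 (G.dist v t / 2) (by omega)
    obtain ⟨m3, h3s, h31, h32⟩ := geodesic_point hG R1 hR1
      (G.dist u v - G.dist v t / 2) (by omega)
    have hm1m2 := hthin v w u Qw Q0 hQw hQ0 m1 h1s m2 h2s (by omega)
      (by have e : G.dist w u = G.dist u w := dist_comm; omega)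
    have hm2r : m2 ∈ Q0.reverse.support := by
      rw [Walk.support_reverse]; exact List.mem_reverse.mpr h2s
    have hQ0r : Q0.reverse.length = G.dist u v := by
      rw [Walk.length_reverse, hQ0, dist_comm]
    have hum2 : G.dist u m2 + G.dist v t / 2 = G.dist u v := by
      have hs := geodesic_split hG Q0 hQ0 h2s
      have e : G.dist m2 u = G.dist u m2 := dist_comm
      omega
    have hm2m3 := hthin u v t Q0.reverse R1 hQ0r hR1 m2 hm2r m3 h3s (by omega) (by omega)
    have t1 := hG.dist_triangle (u := t) (v := m3) (w := w)
    have t2 := hG.dist_triangle (u := m3) (v := m2) (w := w)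
    have t3 := hG.dist_triangle (u := m2) (v := m1) (w := w)
    have e1 : G.dist t m3 = G.dist m3 t := dist_comm
    have e2 : G.dist m3 m2 = G.dist m2 m3 := dist_comm
    have e3 : G.dist m2 m1 = G.dist m1 m2 := dist_comm
    have e4 : G.dist m1 w = G.dist m1 w := rfl
    omega
  -- main case analysis
  rcases le_or_gt (G.dist u t + G.dist u v + G.dist v w)
      (G.dist u w + G.dist u v + G.dist v t) with hord | hord
  · have hr := route1 ((G.dist u t + G.dist u v - G.dist v t) / 2) (by omega) (by omega)
    by_cases hgood : G.dist u w + (G.dist u t + G.dist u v - G.dist v t) % 2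
        ≤ G.dist u v + G.dist v t % 2
    · omega
    · have hBC : G.dist u w = G.dist u v := by omega
      have hAC : G.dist u t + 1 ≤ G.dist u v := by omega
      have := route3 hBC hAC
      omega
  · have hr := route1 ((G.dist u w + G.dist u v - G.dist v w) / 2) (by omega) (by omega)
    by_cases hgood : G.dist u t + G.dist v w + (G.dist u w + G.dist u v - G.dist v w) % 2
        ≤ G.dist u v + G.dist v t + G.dist v t % 2
    · omega
    · have h1 : G.dist u t = G.dist u v := by omega
      have h2 : G.dist v w = G.dist v t := by omega
      have h3 : G.dist v t % 2 = 0 := by omega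
      have := route3' h1 h2 h3
      omega

end Helpers

section EccHelpers

variable [Fintype V] {G : SimpleGraph V}

private lemma dist_le_ecc (G : SimpleGraph V) (v w : V) : G.dist v w ≤ ecc G v :=
  Finset.le_sup (Finset.mem_univ w)

private lemma ecc_le {v : V} {m : ℕ} (h : ∀ w, G.dist v w ≤ m) : ecc G v ≤ m :=
  Finset.sup_le fun w _ => h w

private lemma rad_le_ecc (G : SimpleGraph V) (v : V) : rad G ≤ ecc G v :=
  Nat.sInf_le ⟨v, rfl⟩

private lemma exists_ecc_eq_rad (G : SimpleGraph V) [Nonempty V] :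
    ∃ z, ecc G z = rad G :=
  Nat.sInf_mem (Set.range_nonempty _)

private lemma exists_far (G : SimpleGraph V) [Nonempty V] (x : V) :
    ∃ y, ecc G x = G.dist x y := by
  obtain ⟨b, _, hb⟩ := Finset.exists_mem_eq_sup Finset.univ Finset.univ_nonempty
    (fun w => G.dist x w)
  exact ⟨b, hb⟩

end EccHelpers

/-- If `v ∈ F(u)`, `t ∈ F(v)` and `c` is a vertex of a
`(v,t)`-geodesic at distance `⌈d(v,t)/2⌉` from `t`, then `ecc(c) ≤ rad(G) + 3δ`,
and for every `k ≥ 0` and every `x` with `ecc(x) = rad(G) + k`,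
`k - 3δ ≤ d(x,c) ≤ k + 3δ + 1`; in particular `C(G) ⊆ B(c, 3δ+1)`. -/
theorem stmt_8 [Fintype V] (G : SimpleGraph V) (hG : G.Connected)
    (δ : ℝ) (hδ : 0 ≤ δ) (hthin : ThinTriangles G δ)
    (u v t : V) (hv : G.dist u v = ecc G u) (ht : G.dist v t = ecc G v)
    (P : G.Walk v t) (hP : P.length = G.dist v t)
    (c : V) (hcP : c ∈ P.support) (hc : G.dist t c = (G.dist v t + 1) / 2) :
    (ecc G c : ℝ) ≤ (rad G : ℝ) + 3 * δ ∧
    (∀ (k : ℕ) (x : V), ecc G x = rad G + k →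
      (k : ℝ) - 3 * δ ≤ (G.dist x c : ℝ) ∧ (G.dist x c : ℝ) ≤ (k : ℝ) + 3 * δ + 1) ∧
    (∀ x : V, ecc G x = rad G → (G.dist x c : ℝ) ≤ 3 * δ + 1) := by
  classical
  set n : ℕ := ⌊δ⌋₊ with hn
  have hnδ : (n : ℝ) ≤ δ := Nat.floor_le hδ
  have hthinN : ThinN G n := by
    intro x y z p1 p2 h1 h2 a ha b hb he hcond
    exact Nat.le_floor (hthin x y z p1 p2 h1 h2 a ha b hb he hcond)
  have hNe : Nonempty V := ⟨u⟩
  have hvmax : ∀ x, G.dist u x ≤ G.dist u v := fun x => hv ▸ dist_le_ecc G u x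
  have htmax : ∀ x, G.dist v x ≤ G.dist v t := fun x => ht ▸ dist_le_ecc G v x
  have hB : ∀ w, G.dist t w ≤ G.dist v t + G.dist v t % 2 + 2 * n :=
    lemB hG hthinN u v t hvmax htmax
  -- q ≤ rad
  have hqr : (G.dist v t + 1) / 2 ≤ rad G := by
    obtain ⟨z, hz⟩ := exists_ecc_eq_rad G
    have h1 : G.dist v z ≤ ecc G z := by
      have e : G.dist v z = G.dist z v := dist_comm
      rw [e]; exact dist_le_ecc G z v
    have h2 : G.dist z t ≤ ecc G z := dist_le_ecc G z t
    have h3 := hG.dist_triangle (u := v) (v := z) (w := t)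
    omega
  have hct : G.dist c t = (G.dist v t + 1) / 2 := by
    rw [← hc]; exact dist_comm
  have hsplitc := geodesic_split hG P hP hcP
  -- Part 1, pointwise
  have part1w : ∀ w, G.dist c w ≤ rad G + 3 * n := by
    intro w
    rcases lemA hG hthinN P hP hcP w with h | h
    · have := htmax w; omega
    · have := hB w; omega
  have part1 : ecc G c ≤ rad G + 3 * n := ecc_le part1w
  -- rad ≤ p + 2n + 1
  have hradle : rad G ≤ (G.dist v t - (G.dist v t + 1) / 2) + 2 * n + 1 := by
    by_cases hsp : n + G.dist v t % 2 - 1 ≤ G.dist v t - (G.dist v t + 1) / 2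
    · obtain ⟨m, hms, hm1, hm2⟩ := geodesic_point hG P hP
        ((G.dist v t - (G.dist v t + 1) / 2) - (n + G.dist v t % 2 - 1)) (by omega)
      have hm_allw : ∀ w', G.dist m w' ≤ (G.dist v t - (G.dist v t + 1) / 2) + 2 * n + 1 := by
        intro w'
        rcases lemA hG hthinN P hP hms w' with h | h
        · have := htmax w'; omega
        · have := hB w'; omega
      have h1 := rad_le_ecc G m
      have h2 : ecc G m ≤ (G.dist v t - (G.dist v t + 1) / 2) + 2 * n + 1 := ecc_le hm_allw
      omega
    · have h1 := rad_le_ecc G v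
      have h2 : ecc G v = G.dist v t := ht.symm
      omega
  -- Part 2 upper bound (ℕ)
  have part2upper : ∀ (k : ℕ) (x : V), ecc G x = rad G + k →
      G.dist x c ≤ k + 3 * n + 1 := by
    intro k x hx
    have hvx : G.dist v x ≤ rad G + k := by
      have h1 : G.dist x v ≤ ecc G x := dist_le_ecc G x v
      have e : G.dist v x = G.dist x v := dist_comm
      omega
    have htx : G.dist t x ≤ rad G + k := by
      have h1 : G.dist x t ≤ ecc G x := dist_le_ecc G x t
      have e : G.dist t x = G.dist x t := dist_comm
      omega
    have e : G.dist x c = G.dist c x := dist_comm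
    rcases lemA hG hthinN P hP hcP x with h | h
    · omega
    · omega
  -- Part 2 lower bound (ℕ)
  have part2lower : ∀ (k : ℕ) (x : V), ecc G x = rad G + k →
      k ≤ G.dist x c + 3 * n := by
    intro k x hx
    obtain ⟨y, hy⟩ := exists_far G x
    have h1 := hG.dist_triangle (u := x) (v := c) (w := y)
    have h2 := part1w y
    omega
  refine ⟨?_, ?_, ?_⟩
  · have h : (ecc G c : ℝ) ≤ (rad G : ℝ) + 3 * (n : ℝ) := by exact_mod_cast part1
    linarith
  · intro k x hx
    constructor
    · have h := part2lower k x hx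
      have : (k : ℝ) ≤ (G.dist x c : ℝ) + 3 * (n : ℝ) := by exact_mod_cast h
      linarith
    · have h := part2upper k x hx
      have : (G.dist x c : ℝ) ≤ (k : ℝ) + 3 * (n : ℝ) + 1 := by exact_mod_cast h
      linarith
  · intro x hx
    have h := part2upper 0 x (by omega)
    have h2 : G.dist x c ≤ 3 * n + 1 := by omega
    have : (G.dist x c : ℝ) ≤ 3 * (n : ℝ) + 1 := by exact_mod_cast h2
    linarith
end

section
/- Let G be a finite connected graph with δ-thin triangles, let s be any vertex and T a BFS(s)-tree of G. Let d̃ : V×V → ℕ be any function with d_G(x,y) ≤ d̃(x,y) ≤ 2·d_G(x,y) + 1 for all vertices x,y, and let ρ be any integer with ρ ≥ δ. For all vertices x and y of G, with k = the largest index i ≤ min(h(x),h(y)) such that d̃(x_i,y_i) ≤ 2ρ + 1, one has h(x) + h(y) − 2k − 1 ≤ d_G(x,y) ≤ h(x) + h(y) − 2k + d_G(x_k,y_k). -/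
open SimpleGraph

variable {V : Type*}

private lemma getVert_mapLe {G G' : SimpleGraph V} (h : G ≤ G') {u v : V}
    (w : G.Walk u v) (i : ℕ) : (w.mapLe h).getVert i = w.getVert i := by
  induction w generalizing i with
  | nil => rfl
  | cons hadj w ih =>
    cases i with
    | zero => rfl
    | succ n => simpa [SimpleGraph.Walk.mapLe, SimpleGraph.Walk.getVert_cons_succ] using ih n

private lemma dist_getVert_le {G : SimpleGraph V} (hG : G.Connected) {a b : V}
    (w : G.Walk a b) (i : ℕ) : G.dist a (w.getVert i) ≤ i := by
  induction w generalizing i with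
  | nil => simp [SimpleGraph.Walk.getVert, SimpleGraph.dist_self]
  | cons hadj w ih =>
    cases i with
    | zero => simp [SimpleGraph.Walk.getVert_zero]
    | succ n =>
      rw [SimpleGraph.Walk.getVert_cons_succ]
      calc G.dist _ _ ≤ G.dist _ _ + G.dist _ _ := hG.dist_triangle
        _ ≤ 1 + n := by
            gcongr
            · exact le_trans (G.dist_le (SimpleGraph.Walk.cons hadj SimpleGraph.Walk.nil)) (by simp)
            · exact ih n
        _ = n + 1 := by omega

private lemma dist_getVert_right_le {G : SimpleGraph V} (hG : G.Connected) {a b : V}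
    (w : G.Walk a b) {i : ℕ} (hi : i ≤ w.length) :
    G.dist b (w.getVert i) ≤ w.length - i := by
  have := dist_getVert_le hG w.reverse (w.length - i)
  rwa [SimpleGraph.Walk.getVert_reverse, Nat.sub_sub_self hi] at this

private lemma dist_getVert_eq {G : SimpleGraph V} (hG : G.Connected) {a b : V}
    (w : G.Walk a b) (hw : w.length = G.dist a b) {i : ℕ} (hi : i ≤ w.length) :
    G.dist a (w.getVert i) = i := by
  refine le_antisymm (dist_getVert_le hG w i) ?_
  have h1 : G.dist a b ≤ G.dist a (w.getVert i) + G.dist (w.getVert i) b := hG.dist_triangle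
  have h2 : G.dist (w.getVert i) b ≤ w.length - i := by
    rw [G.dist_comm]; exact dist_getVert_right_le hG w hi
  omega

/-- With `T` a `BFS(s)`-tree, `p z` the tree path of `T` from `s`
to `z` (so `(p z).getVert i = z_i`), `d̃` a distance estimate with
`d_G ≤ d̃ ≤ 2 d_G + 1`, `ρ ≥ δ` an integer, and `k` the largest index
`i ≤ min(h(x),h(y))` with `d̃(x_i,y_i) ≤ 2ρ + 1`, one has
`h(x) + h(y) - 2k - 1 ≤ d_G(x,y) ≤ h(x) + h(y) - 2k + d_G(x_k,y_k)`. -/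
theorem stmt_15 [Fintype V] (G : SimpleGraph V) (hG : G.Connected)
    (δ : ℝ) (hδ : 0 ≤ δ) (hthin : ThinTriangles G δ)
    (s : V) (T : SimpleGraph V) (hTG : T ≤ G) (hT : T.IsTree)
    (hbfs : ∀ z : V, T.dist s z = G.dist s z)
    (p : ∀ z : V, T.Walk s z) (hp : ∀ z : V, (p z).IsPath)
    (dd : V → V → ℕ)
    (hdd₁ : ∀ a b : V, G.dist a b ≤ dd a b)
    (hdd₂ : ∀ a b : V, dd a b ≤ 2 * G.dist a b + 1)
    (ρ : ℤ) (hρ : δ ≤ (ρ : ℝ))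
    (x y : V) (k : ℕ)
    (hk₁ : k ≤ min (G.dist s x) (G.dist s y))
    (hk₂ : (dd ((p x).getVert k) ((p y).getVert k) : ℤ) ≤ 2 * ρ + 1)
    (hk₃ : ∀ i : ℕ, i ≤ min (G.dist s x) (G.dist s y) →
      (dd ((p x).getVert i) ((p y).getVert i) : ℤ) ≤ 2 * ρ + 1 → i ≤ k) :
    (G.dist s x : ℝ) + (G.dist s y : ℝ) - 2 * (k : ℝ) - 1 ≤ (G.dist x y : ℝ) ∧
    (G.dist x y : ℝ) ≤ (G.dist s x : ℝ) + (G.dist s y : ℝ) - 2 * (k : ℝ)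
      + (G.dist ((p x).getVert k) ((p y).getVert k) : ℝ) := by
  -- Tree paths have length equal to the BFS distance
  classical
  have plen : ∀ z : V, (p z).length = G.dist s z := by
    intro z
    obtain ⟨w, hw⟩ := hT.isConnected.exists_walk_length_eq_dist s z
    have h1 : T.dist s z ≤ w.bypass.length := T.dist_le _
    have h2 : w.bypass.length ≤ w.length := SimpleGraph.Walk.length_bypass_le w
    have hq : w.bypass.length = T.dist s z := by omega
    have := (hT.existsUnique_path s z).unique (hp z) (SimpleGraph.Walk.bypass_isPath w)
    rw [this, hq, hbfs z]
  set hx := G.dist s x with hhx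
  set hy := G.dist s y with hhy
  set px : G.Walk s x := (p x).mapLe hTG with hpx
  set py : G.Walk s y := (p y).mapLe hTG with hpy
  have lpx : px.length = hx := by
    rw [hpx]; rw [SimpleGraph.Walk.length_map]; exact plen x
  have lpy : py.length = hy := by
    rw [hpy]; rw [SimpleGraph.Walk.length_map]; exact plen y
  have gvx : ∀ i, px.getVert i = (p x).getVert i := fun i => getVert_mapLe hTG (p x) i
  have gvy : ∀ i, py.getVert i = (p y).getVert i := fun i => getVert_mapLe hTG (p y) i
  have hkx : k ≤ hx := le_trans hk₁ (min_le_left _ _)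
  have hky : k ≤ hy := le_trans hk₁ (min_le_right _ _)
  constructor
  · -- lower bound
    by_contra hcon
    push_neg at hcon
    have hnat : G.dist x y + 2 * k + 2 ≤ hx + hy := by
      have : (G.dist x y : ℝ) + 2 * k + 1 < (hx : ℝ) + hy := by linarith
      have : ((G.dist x y + 2 * k + 1 : ℕ) : ℝ) < ((hx + hy : ℕ) : ℝ) := by push_cast; linarith
      exact_mod_cast this
    -- triangle inequalities give (x|y)_s ≤ min
    have t1 : hx ≤ hy + G.dist x y := by
      calc hx = G.dist s x := rfl
        _ ≤ G.dist s y + G.dist y x := hG.dist_triangle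
        _ = hy + G.dist x y := by rw [SimpleGraph.dist_comm (u := y) (v := x)]
    have t2 : hy ≤ hx + G.dist x y := by
      calc hy = G.dist s y := rfl
        _ ≤ G.dist s x + G.dist x y := hG.dist_triangle
    have hi : k + 1 ≤ min hx hy := by omega
    have hix : k + 1 ≤ px.length := by omega
    have hiy : k + 1 ≤ py.length := by omega
    have hu : px.getVert (k+1) ∈ px.support :=
      SimpleGraph.Walk.mem_support_iff_exists_getVert.2 ⟨k+1, rfl, hix⟩
    have hv : py.getVert (k+1) ∈ py.support :=
      SimpleGraph.Walk.mem_support_iff_exists_getVert.2 ⟨k+1, rfl, hiy⟩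
    have du : G.dist s (px.getVert (k+1)) = k+1 := dist_getVert_eq hG px (lpx ▸ rfl) hix
    have dv : G.dist s (py.getVert (k+1)) = k+1 := dist_getVert_eq hG py (lpy ▸ rfl) hiy
    have hthin' := hthin s x y px py (lpx ▸ rfl) (lpy ▸ rfl)
      (px.getVert (k+1)) hu (py.getVert (k+1)) hv (du.trans dv.symm)
      (by rw [du]; omega)
    have hρ' : (G.dist (px.getVert (k+1)) (py.getVert (k+1)) : ℤ) ≤ ρ := by
      have : (G.dist (px.getVert (k+1)) (py.getVert (k+1)) : ℝ) ≤ (ρ : ℝ) :=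
        le_trans hthin' hρ
      exact_mod_cast this
    have hdd : (dd ((p x).getVert (k+1)) ((p y).getVert (k+1)) : ℤ) ≤ 2 * ρ + 1 := by
      have h2 := hdd₂ ((p x).getVert (k+1)) ((p y).getVert (k+1))
      rw [gvx, gvy] at hρ'
      have : (dd ((p x).getVert (k+1)) ((p y).getVert (k+1)) : ℤ)
          ≤ 2 * (G.dist ((p x).getVert (k+1)) ((p y).getVert (k+1)) : ℤ) + 1 := by
        exact_mod_cast h2
      omega
    have := hk₃ (k+1) hi hdd
    omega
  · -- upper bound
    have dxu : G.dist x (px.getVert k) ≤ hx - k := by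
      have := dist_getVert_right_le hG px (i := k) (by omega)
      rwa [lpx] at this
    have dyv : G.dist y (py.getVert k) ≤ hy - k := by
      have := dist_getVert_right_le hG py (i := k) (by omega)
      rwa [lpy] at this
    have tri : G.dist x y ≤ G.dist x (px.getVert k) + G.dist (px.getVert k) (py.getVert k)
        + G.dist (py.getVert k) y :=
      le_trans hG.dist_triangle (by gcongr; exact hG.dist_triangle)
    have hnat : G.dist x y + 2 * k ≤ hx + hy + G.dist (px.getVert k) (py.getVert k) := by
      rw [SimpleGraph.dist_comm (u := py.getVert k) (v := y)] at tri
      omega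
    rw [← gvx k, ← gvy k]
    have : ((G.dist x y + 2 * k : ℕ) : ℝ)
        ≤ ((hx + hy + G.dist (px.getVert k) (py.getVert k) : ℕ) : ℝ) := by exact_mod_cast hnat
    push_cast at this
    linarith
end
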